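/- Let n = 2p be an even integer, let indices of letters be taken modulo n, let N ≥ 2, and let α : Fin n → Fin n → ℝ satisfy the compatibility condition: there exists a constant a ∈ ℝ such that α(k,l) + α(k+p, l) = a and α(l,k) + α(l, k+p) = a for all letters k, l. For X : Fin N → Fin n let H(X) = Σ_{i<j} α(X_i, X_j). Suppose X has a fold at adjacent sites i, i+1, i.e. X_i = k and X_{i+1} = k+p, and let X' be obtained from X by rotating the fold: X'_i = k+1, X'_{i+1} = k+p+1, and X'_j = X_j elsewhere. Then H(X') − H(X) = α(k+1, k+p+1) − α(k, k+p); in particular the energy change does not depend on the values of X at the other sites. -/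

import Mathlib

/-!
Only the pairs of sites meeting the fold change. For any other site `j`, the two sites of the
fold contribute `α(X_j, ·) + α(X_j, ·)` or `α(·, X_j) + α(·, X_j)` to the energy, according as
`j` lies to the left or to the right of the fold, because the fold sites are adjacent; for the
opposite letters `(k, k+p)` and `(k+1, k+1+p)` these sums both equal `a` by the compatibility
condition. What remains is the interaction inside the fold.
-/

open Finset
open Fin.NatCast

/-- Energy of a configuration of the `n`-letter exclusion model on `N` sites:
`H(X) = ∑_{i<j} α(X i, X j)`. -/
noncomputable def energy {N n : ℕ} (α : Fin n → Fin n → ℝ) (X : Fin N → Fin n) : ℝ :=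
  ∑ p ∈ Finset.univ.filter (fun p : Fin N × Fin N => p.1 < p.2), α (X p.1) (X p.2)

lemma energy_eq_sum_sum {N n : ℕ} (α : Fin n → Fin n → ℝ) (X : Fin N → Fin n) :
    energy α X = ∑ j, ∑ l, if j < l then α (X j) (X l) else 0 := by
  rw [energy, Finset.sum_filter, Fintype.sum_prod_type]

section AdjacentUpdate

variable {N n : ℕ} {α : Fin n → Fin n → ℝ} {X X' : Fin N → Fin n} {s t : Fin N}

lemma energy_sub_of_update_adjacent (hst : (s : ℕ) + 1 = t)
    (hother : ∀ j, j ≠ s → j ≠ t → X' j = X j)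
    (hleft : ∀ l, α l (X' s) + α l (X' t) = α l (X s) + α l (X t))
    (hright : ∀ l, α (X' s) l + α (X' t) l = α (X s) l + α (X t) l) :
    energy α X' - energy α X = α (X' s) (X' t) - α (X s) (X t) := by
  set D : Fin N → Fin N → ℝ := fun j l =>
    (if j < l then α (X' j) (X' l) else 0) - (if j < l then α (X j) (X l) else 0) with hD
  have hst_ne : s ≠ t := fun h => by simp [h] at hst
  have hst_lt : s < t := by rw [Fin.lt_def]; omega
  have hrow : ∀ j, j ≠ s ∧ j ≠ t → ∑ l, D j l = 0 := by
    rintro j ⟨hjs, hjt⟩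
    rw [Fintype.sum_eq_add s t hst_ne fun l ⟨hls, hlt⟩ => by simp [hD, hother j hjs hjt,
      hother l hls hlt]]
    by_cases hj : j < s
    · have hj' : j < t := hj.trans hst_lt
      simp only [hD, if_pos hj, if_pos hj', hother j hjs hjt]
      linarith [hleft (X j)]
    · have hj' : ¬ j < t := by
        rw [Fin.lt_def] at hj ⊢; rw [Ne, Fin.ext_iff] at hjs; omega
      simp [hD, hj, hj']
  have hpair : ∀ l, D s l + D t l = if l = t then α (X' s) (X' t) - α (X s) (X t) else 0 := by
    intro l
    by_cases hlt : l = t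
    · subst hlt; simp [hD, hst_lt]
    by_cases hls : l = s
    · subst hls; simp [hD, hst_lt.not_gt, hlt]
    by_cases hl : t < l
    · have hl' : s < l := hst_lt.trans hl
      simp only [hD, if_pos hl, if_pos hl', if_neg hlt, hother l hls hlt]
      linarith [hright (X l)]
    · have hl' : ¬ s < l := by
        rw [Fin.lt_def] at hl ⊢; rw [Fin.ext_iff] at hls hlt; omega
      simp [hD, hl, hl', hlt]
  calc energy α X' - energy α X = ∑ j, ∑ l, D j l := by
        simp only [energy_eq_sum_sum, hD, ← Finset.sum_sub_distrib]
    _ = ∑ l, (D s l + D t l) := by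
        rw [Fintype.sum_eq_add s t hst_ne hrow, Finset.sum_add_distrib]
    _ = α (X' s) (X' t) - α (X s) (X t) := by simp [hpair]

end AdjacentUpdate

/-- In the even alphabet model (`n = 2p`, letters mod `n`) with couplings satisfying the
compatibility condition `α(k,l) + α(k+p,l) = a` and `α(l,k) + α(l,k+p) = a`, rotating a
fold `(k, k+p) ↦ (k+1, k+p+1)` at adjacent sites changes the energy by
`α(k+1, k+p+1) − α(k, k+p)`, independently of the values at the other sites. -/
theorem energy_fold_rotation (p n N : ℕ) [NeZero n]
    (α : Fin n → Fin n → ℝ) (a : ℝ)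
    (hcomp : ∀ k l : Fin n,
      α k l + α (k + (p : Fin n)) l = a ∧ α l k + α l (k + (p : Fin n)) = a)
    (X X' : Fin N → Fin n) (i : ℕ) (hi : i + 1 < N) (k : Fin n)
    (hXi : X ⟨i, by omega⟩ = k) (hXi1 : X ⟨i + 1, hi⟩ = k + (p : Fin n))
    (hX'i : X' ⟨i, by omega⟩ = k + 1) (hX'i1 : X' ⟨i + 1, hi⟩ = k + (p : Fin n) + 1)
    (hX'other : ∀ j : Fin N, j ≠ ⟨i, by omega⟩ → j ≠ ⟨i + 1, hi⟩ → X' j = X j) :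
    energy α X' - energy α X = α (k + 1) (k + (p : Fin n) + 1) - α k (k + (p : Fin n)) := by
  have hshift : k + (p : Fin n) + 1 = k + 1 + (p : Fin n) := add_right_comm _ _ _
  have hupdate := energy_sub_of_update_adjacent rfl hX'other
    (fun l => by rw [hX'i, hX'i1, hXi, hXi1, hshift, (hcomp _ l).2, (hcomp _ l).2])
    (fun l => by rw [hX'i, hX'i1, hXi, hXi1, hshift, (hcomp _ l).1, (hcomp _ l).1])
  rwa [hX'i, hX'i1, hXi, hXi1] at hupdate
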